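/- arXiv:1503.09030 — 2 statements merged into one kernel-verified Lean document; each statement's English description precedes it below -/
import Mathlib

section
/- For every integer k ≥ 3, the function f_k has a unique local minimum on (0,∞), at which it attains the value d_k; moreover, for every d > d_k the equation f_k(λ) = d has precisely two solutions λ ∈ (0,∞). -/
open Real Set Filter

/-- Upper tail of the Poisson distribution with mean `lam`:
`P[Po(lam) ≥ m] = ∑_{j ≥ m} e^{-lam} lam^j / j!`. -/
noncomputable def poTail (lam : ℝ) (m : ℕ) : ℝ :=
  ∑' j : ℕ, if m ≤ j then Real.exp (-lam) * lam ^ j / (j.factorial : ℝ) else 0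

/-- `f_k(λ) = λ / P[Po(λ) ≥ k-1]`. -/
noncomputable def fPW (k : ℕ) (lam : ℝ) : ℝ := lam / poTail lam (k - 1)

/-- `d_k = inf { f_k(λ) : λ > 0 }`. -/
noncomputable def dPW (k : ℕ) : ℝ := sInf (fPW k '' Set.Ioi (0 : ℝ))

/-!
Write `T = poTail · (k - 1)`, so that `f_k x = x / T x` and `T' x = e^{-x} x^{k-2} / (k-2)!`.
The sign of `f_k'` is that of `N = T - x T'`, and `N' x = e^{-x} x^{k-2} (x - (k-2)) / (k-2)!`:
starting from `N 0 = 0`, `N` decreases on `[0, k-2]` and then increases to its limit `1`, so it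
changes sign exactly once, at some `a > 0`. Hence `f_k` is strictly decreasing on `(0, a]` and
strictly increasing on `[a, ∞)`. Since `T x = o(x)` at `0` and `T ≤ 1`, `f_k` tends to `∞` at both
ends, so each value above `f_k a = d_k` is attained exactly once on either side of `a`.
-/

open Topology
open scoped Nat

section Unimodal

variable {f : ℝ → ℝ} {c a : ℝ}

theorem isMinOn_of_strictAntiOn_of_strictMonoOn (ha : c < a)
    (h_anti : StrictAntiOn f (Ioc c a)) (h_mono : StrictMonoOn f (Ici a)) :
    IsMinOn f (Ioi c) a := by
  intro x (hx : c < x)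
  rcases le_total x a with hxa | hax
  · exact h_anti.antitoneOn ⟨hx, hxa⟩ ⟨ha, le_rfl⟩ hxa
  · exact h_mono.monotoneOn self_mem_Ici hax hax

theorem eq_of_isLocalMinOn_of_strictAntiOn_of_strictMonoOn
    (h_anti : StrictAntiOn f (Ioc c a)) (h_mono : StrictMonoOn f (Ici a))
    {b : ℝ} (hb : c < b) (hmin : IsLocalMinOn f (Ioi c) b) : b = a := by
  have hmin : ∀ᶠ x in 𝓝 b, f b ≤ f x := hmin.isLocalMin (Ioi_mem_nhds hb)
  by_contra hne
  rcases lt_or_gt_of_ne hne with hba | hab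
  · obtain ⟨x, hbx, ⟨hbx', hxa⟩⟩ :=
      ((hmin.filter_mono nhdsWithin_le_nhds).and (Ioo_mem_nhdsGT hba)).exists
    exact (h_anti ⟨hb, hba.le⟩ ⟨hb.trans hbx', hxa.le⟩ hbx').not_ge hbx
  · obtain ⟨x, hbx, ⟨hax, hxb⟩⟩ :=
      ((hmin.filter_mono nhdsWithin_le_nhds).and (Ioo_mem_nhdsLT hab)).exists
    exact (h_mono hax.le (hax.trans hxb).le hxb).not_ge hbx

theorem exists_pair_forall_eq_iff_of_strictAntiOn_of_strictMonoOn (ha : c < a)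
    (h_anti : StrictAntiOn f (Ioc c a)) (h_mono : StrictMonoOn f (Ici a))
    (hcont : ContinuousOn f (Ioi c)) (h_left : Tendsto f (𝓝[>] c) atTop)
    (h_right : Tendsto f atTop atTop) {d : ℝ} (hd : f a < d) :
    ∃ x₁ x₂ : ℝ, x₁ ≠ x₂ ∧ ∀ x, (c < x ∧ f x = d) ↔ (x = x₁ ∨ x = x₂) := by
  obtain ⟨u, hdu, hcu, hua⟩ :=
    ((h_left.eventually_gt_atTop d).and (Ioo_mem_nhdsGT ha)).exists
  obtain ⟨v, hdv, hav⟩ := ((h_right.eventually_gt_atTop d).and (eventually_gt_atTop a)).exists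
  obtain ⟨x₁, ⟨hux₁, hx₁a⟩, hx₁⟩ := intermediate_value_Ioo' hua.le
    (hcont.mono fun x hx => hcu.trans_le hx.1) ⟨hd, hdu⟩
  obtain ⟨x₂, ⟨hax₂, hx₂v⟩, hx₂⟩ := intermediate_value_Ioo hav.le
    (hcont.mono fun x hx => ha.trans_le hx.1) ⟨hd, hdv⟩
  have hx₁c : c < x₁ := hcu.trans hux₁
  refine ⟨x₁, x₂, (hx₁a.trans hax₂).ne, fun x => ⟨?_, ?_⟩⟩
  · rintro ⟨hcx, hx⟩
    rcases le_or_gt x a with hxa | hax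
    · exact .inl (h_anti.injOn ⟨hcx, hxa⟩ ⟨hx₁c, hx₁a.le⟩ (hx.trans hx₁.symm))
    · exact .inr (h_mono.injOn hax.le hax₂.le (hx.trans hx₂.symm))
  · rintro (rfl | rfl)
    exacts [⟨hx₁c, hx₁⟩, ⟨ha.trans hax₂, hx₂⟩]

end Unimodal

theorem exists_sign_change_of_strictAntiOn_of_strictMonoOn {g : ℝ → ℝ} {u c : ℝ}
    (hg : Continuous g) (hu : g u = 0) (huc : u < c)
    (h_anti : StrictAntiOn g (Icc u c)) (h_mono : StrictMonoOn g (Ici c))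
    (h_top : ∀ᶠ x in atTop, 0 < g x) :
    ∃ a, c < a ∧ (∀ x ∈ Ioo u a, g x < 0) ∧ ∀ x ∈ Ioi a, 0 < g x := by
  have hc : g c < 0 := hu ▸ h_anti ⟨le_rfl, huc.le⟩ ⟨huc.le, le_rfl⟩ huc
  obtain ⟨b, hb, hcb⟩ := (h_top.and (eventually_gt_atTop c)).exists
  obtain ⟨a, ⟨hca, hab⟩, ha⟩ := intermediate_value_Ioo hcb.le hg.continuousOn ⟨hc, hb⟩
  refine ⟨a, hca, fun x ⟨hux, hxa⟩ => ?_, fun x hax => ?_⟩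
  · rcases le_or_gt x c with hxc | hcx
    · exact hu ▸ h_anti ⟨le_rfl, huc.le⟩ ⟨hux.le, hxc⟩ hux
    · exact ha ▸ h_mono hcx.le hca.le hxa
  · exact ha ▸ h_mono hca.le (hca.trans hax).le hax

noncomputable def poissonTerm (n : ℕ) (x : ℝ) : ℝ := exp (-x) * x ^ n / n !

theorem hasSum_poissonTerm (x : ℝ) : HasSum (poissonTerm · x) 1 := by
  have h := (NormedSpace.expSeries_div_hasSum_exp x).mul_left (exp (-x))
  rw [← exp_eq_exp_ℝ, ← exp_add, neg_add_cancel, exp_zero] at h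
  simpa only [poissonTerm, mul_div_assoc] using h

theorem poissonTerm_pos {x : ℝ} (hx : 0 < x) (n : ℕ) : 0 < poissonTerm n x := by
  unfold poissonTerm; positivity

theorem poissonTerm_succ (n : ℕ) (x : ℝ) :
    poissonTerm (n + 1) x = poissonTerm n x * x / (n + 1) := by
  simp only [poissonTerm, Nat.factorial_succ, Nat.cast_mul, pow_succ]
  field_simp
  push_cast
  ring

theorem hasDerivAt_poissonTerm_succ (n : ℕ) (x : ℝ) :
    HasDerivAt (poissonTerm (n + 1)) (poissonTerm n x - poissonTerm (n + 1) x) x := by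
  have h : HasDerivAt (fun y => exp (-y) * y ^ (n + 1) / (n + 1)!) _ x :=
    (((hasDerivAt_neg x).exp).mul (hasDerivAt_pow (n + 1) x)).div_const ((n + 1)! : ℝ)
  refine h.congr_deriv ?_
  rw [poissonTerm_succ, poissonTerm]
  simp only [Nat.factorial_succ, Nat.cast_mul, Nat.add_sub_cancel]
  field_simp
  push_cast
  ring

theorem tendsto_poissonTerm_atTop (n : ℕ) : Tendsto (poissonTerm n) atTop (𝓝 0) := by
  have h := (tendsto_pow_mul_exp_neg_atTop_nhds_zero n).div_const (n ! : ℝ)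
  rw [zero_div] at h
  exact h.congr fun y => by rw [poissonTerm, mul_comm]

theorem poTail_eq_tsum (x : ℝ) (m : ℕ) :
    poTail x m = ∑' j, if m ≤ j then poissonTerm j x else 0 := rfl

theorem poTail_zero_right (x : ℝ) : poTail x 0 = 1 := by
  simpa [poTail_eq_tsum] using (hasSum_poissonTerm x).tsum_eq

theorem summable_ite_poissonTerm (x : ℝ) (m : ℕ) :
    Summable fun j => if m ≤ j then poissonTerm j x else 0 := by
  refine ((hasSum_poissonTerm x).summable.indicator {j | m ≤ j}).congr fun j => ?_
  simp [Set.indicator_apply]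

theorem poTail_succ (x : ℝ) (m : ℕ) : poTail x (m + 1) = poTail x m - poissonTerm m x := by
  have h : ∀ j, (if m ≤ j then poissonTerm j x else 0) =
      (if m + 1 ≤ j then poissonTerm j x else 0) + if j = m then poissonTerm m x else 0 := by
    intro j
    rcases lt_trichotomy j m with h | rfl | h
    · simp [h.not_ge, h.ne, show ¬ m + 1 ≤ j by omega]
    · simp
    · simp [h.le, h.ne', show m + 1 ≤ j by omega]
  rw [poTail_eq_tsum, poTail_eq_tsum, tsum_congr h, Summable.tsum_add, tsum_ite_eq]
  · ring
  · exact summable_ite_poissonTerm x (m + 1)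
  · exact summable_of_ne_finset_zero (s := {m}) (by simp +contextual)

theorem poTail_pos {x : ℝ} (hx : 0 < x) (m : ℕ) : 0 < poTail x m :=
  (summable_ite_poissonTerm x m).tsum_pos
    (fun j => by split_ifs <;> simp [(poissonTerm_pos hx j).le]) m
    (by simpa using poissonTerm_pos hx m)

theorem poTail_le_one {x : ℝ} (hx : 0 < x) (m : ℕ) : poTail x m ≤ 1 := by
  induction m with
  | zero => rw [poTail_zero_right]
  | succ m ih => rw [poTail_succ]; linarith [poissonTerm_pos hx m]

theorem poTail_zero_left (m : ℕ) : poTail 0 (m + 1) = 0 := by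
  induction m with
  | zero => simp [poTail_succ, poTail_zero_right, poissonTerm]
  | succ m ih => simp [poTail_succ _ (m + 1), ih, poissonTerm]

theorem hasDerivAt_poTail_succ (n : ℕ) (x : ℝ) :
    HasDerivAt (poTail · (n + 1)) (poissonTerm n x) x := by
  induction n with
  | zero =>
    have h : (poTail · 1) = fun y => 1 - exp (-y) := by
      ext y; simp [poTail_succ, poTail_zero_right, poissonTerm]
    rw [h]
    exact (((hasDerivAt_neg x).exp).const_sub 1).congr_deriv (by simp [poissonTerm])
  | succ n ih =>
    have h : (poTail · (n + 2)) = fun y => poTail y (n + 1) - poissonTerm (n + 1) y := by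
      ext y; exact poTail_succ y (n + 1)
    rw [h]
    exact (ih.sub (hasDerivAt_poissonTerm_succ n x)).congr_deriv (by ring)

theorem tendsto_poTail_atTop (m : ℕ) : Tendsto (poTail · m) atTop (𝓝 1) := by
  induction m with
  | zero => simp [poTail_zero_right]
  | succ m ih => simpa [poTail_succ] using ih.sub (tendsto_poissonTerm_atTop m)

noncomputable def fPWNumer (n : ℕ) (x : ℝ) : ℝ := poTail x (n + 2) - x * poissonTerm (n + 1) x

theorem fPWNumer_zero (n : ℕ) : fPWNumer n 0 = 0 := by
  simp [fPWNumer, poTail_zero_left]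

theorem hasDerivAt_fPWNumer (n : ℕ) (x : ℝ) :
    HasDerivAt (fPWNumer n) (x * poissonTerm n x * (x - (n + 1)) / (n + 1)) x := by
  refine ((hasDerivAt_poTail_succ (n + 1) x).sub
    ((hasDerivAt_id' x).mul (hasDerivAt_poissonTerm_succ n x))).congr_deriv ?_
  rw [poissonTerm_succ]
  field_simp
  ring

theorem continuous_fPWNumer (n : ℕ) : Continuous (fPWNumer n) :=
  continuous_iff_continuousAt.2 fun x => (hasDerivAt_fPWNumer n x).continuousAt

theorem strictAntiOn_fPWNumer (n : ℕ) : StrictAntiOn (fPWNumer n) (Icc 0 (n + 1)) := by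
  refine strictAntiOn_of_hasDerivWithinAt_neg (convex_Icc _ _)
    (continuous_fPWNumer n).continuousOn
    (fun x _ => (hasDerivAt_fPWNumer n x).hasDerivWithinAt) fun x hx => ?_
  rw [interior_Icc] at hx
  have hneg : x - (n + 1) < 0 := by linarith [hx.2]
  exact div_neg_of_neg_of_pos
    (mul_neg_of_pos_of_neg (mul_pos hx.1 (poissonTerm_pos hx.1 n)) hneg) (by positivity)

theorem strictMonoOn_fPWNumer (n : ℕ) : StrictMonoOn (fPWNumer n) (Ici (n + 1)) := by
  refine strictMonoOn_of_hasDerivWithinAt_pos (convex_Ici _)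
    (continuous_fPWNumer n).continuousOn
    (fun x _ => (hasDerivAt_fPWNumer n x).hasDerivWithinAt) fun x hx => ?_
  rw [interior_Ici] at hx
  have hx0 : 0 < x := (Nat.cast_add_one_pos n).trans hx
  have hpos : 0 < x - (n + 1) := by linarith [mem_Ioi.1 hx]
  exact div_pos (mul_pos (mul_pos hx0 (poissonTerm_pos hx0 n)) hpos) (by positivity)

theorem tendsto_fPWNumer_atTop (n : ℕ) : Tendsto (fPWNumer n) atTop (𝓝 1) := by
  have h : fPWNumer n = fun x => poTail x (n + 2) - (n + 2) * poissonTerm (n + 2) x := by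
    ext x; rw [fPWNumer, poissonTerm_succ (n + 1)]; push_cast; field_simp; ring
  simpa [h] using
    (tendsto_poTail_atTop (n + 2)).sub ((tendsto_poissonTerm_atTop (n + 2)).const_mul (n + 2 : ℝ))

theorem fPW_eq (n : ℕ) : fPW (n + 3) = fun x => x / poTail x (n + 2) := rfl

theorem hasDerivAt_fPW (n : ℕ) {x : ℝ} (hx : 0 < x) :
    HasDerivAt (fPW (n + 3)) (fPWNumer n x / poTail x (n + 2) ^ 2) x := by
  rw [fPW_eq]
  refine ((hasDerivAt_id' x).div (hasDerivAt_poTail_succ (n + 1) x)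
    (poTail_pos hx _).ne').congr_deriv ?_
  simp [fPWNumer]

theorem continuousOn_fPW (n : ℕ) : ContinuousOn (fPW (n + 3)) (Ioi 0) :=
  fun _ hx => (hasDerivAt_fPW n hx).continuousAt.continuousWithinAt

theorem exists_strictAntiOn_strictMonoOn_fPW (n : ℕ) :
    ∃ a, 0 < a ∧ StrictAntiOn (fPW (n + 3)) (Ioc 0 a) ∧ StrictMonoOn (fPW (n + 3)) (Ici a) := by
  obtain ⟨a, hna, hneg, hpos⟩ := exists_sign_change_of_strictAntiOn_of_strictMonoOn
    (continuous_fPWNumer n) (fPWNumer_zero n) (Nat.cast_add_one_pos n)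
    (strictAntiOn_fPWNumer n) (strictMonoOn_fPWNumer n)
    ((tendsto_fPWNumer_atTop n).eventually_const_lt one_pos)
  have ha : 0 < a := (Nat.cast_add_one_pos n).trans hna
  refine ⟨a, ha, ?_, ?_⟩
  · refine strictAntiOn_of_hasDerivWithinAt_neg (convex_Ioc 0 a)
      ((continuousOn_fPW n).mono Ioc_subset_Ioi_self)
      (fun x hx => (hasDerivAt_fPW n (interior_subset hx).1).hasDerivWithinAt) fun x hx => ?_
    rw [interior_Ioc] at hx
    exact div_neg_of_neg_of_pos (hneg x hx) (pow_pos (poTail_pos hx.1 _) 2)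
  · refine strictMonoOn_of_hasDerivWithinAt_pos (convex_Ici a)
      ((continuousOn_fPW n).mono fun x hx => ha.trans_le hx)
      (fun x hx => (hasDerivAt_fPW n (ha.trans_le (interior_subset hx))).hasDerivWithinAt)
      fun x hx => ?_
    rw [interior_Ici] at hx
    exact div_pos (hpos x hx) (pow_pos (poTail_pos (ha.trans hx) _) 2)

theorem tendsto_fPW_nhdsGT_zero (n : ℕ) : Tendsto (fPW (n + 3)) (𝓝[>] 0) atTop := by
  have hslope := (hasDerivAt_poTail_succ (n + 1) 0).tendsto_slope_zero_right
  simp only [zero_add, poTail_zero_left, sub_zero, smul_eq_mul] at hslope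
  have hslope' : Tendsto (fun t => t⁻¹ * poTail t (n + 2)) (𝓝[>] 0) (𝓝[>] 0) := by
    refine tendsto_nhdsWithin_iff.2 ⟨by simpa [poissonTerm] using hslope, ?_⟩
    filter_upwards [self_mem_nhdsWithin] with t ht
    exact mul_pos (inv_pos.2 ht) (poTail_pos ht _)
  refine (tendsto_inv_nhdsGT_zero.comp hslope').congr fun t => ?_
  simp [fPW_eq, div_eq_inv_mul]

theorem tendsto_fPW_atTop (n : ℕ) : Tendsto (fPW (n + 3)) atTop atTop := by
  refine tendsto_atTop_mono' atTop ?_ tendsto_id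
  filter_upwards [eventually_gt_atTop 0] with x hx
  exact le_div_self hx.le (poTail_pos hx _) (poTail_le_one hx _)

theorem stmt_1 (k : ℕ) (hk : 3 ≤ k) :
    (∃ lam0 : ℝ, 0 < lam0 ∧ IsLocalMinOn (fPW k) (Set.Ioi (0 : ℝ)) lam0 ∧
      fPW k lam0 = dPW k ∧
      ∀ lam : ℝ, 0 < lam → IsLocalMinOn (fPW k) (Set.Ioi (0 : ℝ)) lam → lam = lam0) ∧
    ∀ d : ℝ, dPW k < d → ∃ lam1 lam2 : ℝ, lam1 ≠ lam2 ∧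
      ∀ lam : ℝ, (0 < lam ∧ fPW k lam = d) ↔ (lam = lam1 ∨ lam = lam2) := by
  obtain ⟨n, rfl⟩ : ∃ n, k = n + 3 := ⟨k - 3, by omega⟩
  obtain ⟨a, ha, h_anti, h_mono⟩ := exists_strictAntiOn_strictMonoOn_fPW n
  have hmin := isMinOn_of_strictAntiOn_of_strictMonoOn ha h_anti h_mono
  have hd : dPW (n + 3) = fPW (n + 3) a :=
    IsLeast.csInf_eq ⟨mem_image_of_mem _ ha, forall_mem_image.2 fun _ hx => hmin hx⟩
  refine ⟨⟨a, ha, hmin.localize, hd.symm, fun b hb hb_min =>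
    eq_of_isLocalMinOn_of_strictAntiOn_of_strictMonoOn h_anti h_mono hb hb_min⟩,
    fun d hd' => exists_pair_forall_eq_iff_of_strictAntiOn_of_strictMonoOn ha h_anti h_mono
      (continuousOn_fPW n) (tendsto_fPW_nhdsGT_zero n) (tendsto_fPW_atTop n) (hd ▸ hd')⟩
end

section
/- Let G be a locally finite graph and k ≥ 3. For every vertex v of G, the limit lim_{t→∞} μ_v(t | G) exists, and v belongs to the k-core C_k(G) if and only if lim_{t→∞} μ_v(t | G) = 1; that is, C_k(G) = {v ∈ V(G) : μ_v(t | G) = 1 for all t ≥ 0}. -/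
open Filter

/-- Warning Propagation messages: `wpMsg G k t v w = true` iff `μ_{v→w}(t|G) = 1`.
Initially all messages equal `1`; subsequently `μ_{v→w}(t+1|G) = 1` iff at least
`k-1` neighbours `u ≠ w` of `v` satisfy `μ_{u→v}(t|G) = 1`. -/
def wpMsg {V : Type*} (G : SimpleGraph V) [∀ v, Fintype (G.neighborSet v)] [DecidableEq V]
    (k : ℕ) : ℕ → V → V → Bool
  | 0, _, _ => true
  | t + 1, v, w =>
      decide (k - 1 ≤ (((G.neighborFinset v).erase w).filter
        (fun u => wpMsg G k t u v = true)).card)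

/-- Warning Propagation marks: `wpMark G k t v = true` iff `μ_v(t|G) = 1`, i.e. iff at
least `k` neighbours `u` of `v` satisfy `μ_{u→v}(t|G) = 1`. -/
def wpMark {V : Type*} (G : SimpleGraph V) [∀ v, Fintype (G.neighborSet v)] [DecidableEq V]
    (k t : ℕ) (v : V) : Bool :=
  decide (k ≤ ((G.neighborFinset v).filter (fun u => wpMsg G k t u v = true)).card)

/-- `A` induces a subgraph of `G` of minimum degree at least `k`. -/
def degGE {V : Type*} (G : SimpleGraph V) (k : ℕ) (A : Set V) : Prop :=
  ∀ v ∈ A, ∃ s : Finset V, (↑s : Set V) ⊆ A ∩ G.neighborSet v ∧ k ≤ s.card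

/-- The vertex set of the `k`-core of `G`: the union of all vertex sets inducing
subgraphs of minimum degree at least `k`. -/
def coreSet {V : Type*} (G : SimpleGraph V) (k : ℕ) : Set V :=
  ⋃₀ {A : Set V | degGE G k A}

section Aux
variable {V : Type*} (G : SimpleGraph V) [∀ v, Fintype (G.neighborSet v)] [DecidableEq V]
    (k : ℕ)

lemma wpMsg_zero (v w : V) : wpMsg G k 0 v w = true := rfl

lemma wpMsg_succ (t : ℕ) (v w : V) :
    wpMsg G k (t + 1) v w = decide (k - 1 ≤ (((G.neighborFinset v).erase w).filter
        (fun u => wpMsg G k t u v = true)).card) := rfl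

lemma wpMsg_succ_imp : ∀ t (v w : V), wpMsg G k (t + 1) v w = true → wpMsg G k t v w = true := by
  intro t
  induction t with
  | zero => intro v w _; rfl
  | succ t ih =>
    intro v w h
    rw [wpMsg_succ, decide_eq_true_eq] at h ⊢
    refine le_trans h (Finset.card_le_card ?_)
    intro u hu
    simp only [Finset.mem_filter] at hu ⊢
    exact ⟨hu.1, ih u v hu.2⟩

lemma wpMsg_anti {t t' : ℕ} (h : t ≤ t') (v w : V) (ht' : wpMsg G k t' v w = true) :
    wpMsg G k t v w = true := by
  induction t' with
  | zero => exact (Nat.le_zero.mp h) ▸ ht'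
  | succ t' ih =>
    rcases Nat.lt_or_ge t (t' + 1) with h1 | h1
    · exact ih (Nat.lt_succ_iff.mp h1) (wpMsg_succ_imp G k t' v w ht')
    · have : t = t' + 1 := le_antisymm h h1
      exact this ▸ ht'

lemma wpMark_anti {t t' : ℕ} (h : t ≤ t') (v : V) (ht' : wpMark G k t' v = true) :
    wpMark G k t v = true := by
  rw [wpMark, decide_eq_true_eq] at ht' ⊢
  refine le_trans ht' (Finset.card_le_card ?_)
  intro u hu
  simp only [Finset.mem_filter] at hu ⊢
  exact ⟨hu.1, wpMsg_anti G k h u v hu.2⟩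

/-- If the mark of `v` at time `t` is true, `v` sends true messages at time `t+1`. -/
lemma wpMark_msg {t : ℕ} {v : V} (h : wpMark G k t v = true) (w : V) :
    wpMsg G k (t + 1) v w = true := by
  rw [wpMark, decide_eq_true_eq] at h
  rw [wpMsg_succ, decide_eq_true_eq]
  rw [Finset.filter_erase]
  have := Finset.pred_card_le_card_erase
    (s := (G.neighborFinset v).filter (fun u => wpMsg G k t u v = true)) (a := w)
  omega

lemma core_msg {A : Set V} (hA : degGE G k A) :
    ∀ t, ∀ v ∈ A, ∀ w, wpMsg G k t v w = true := by
  intro t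
  induction t with
  | zero => intro v _ w; rfl
  | succ t ih =>
    intro v hv w
    obtain ⟨s, hs, hcard⟩ := hA v hv
    rw [wpMsg_succ, decide_eq_true_eq]
    have hsub : s.erase w ⊆ ((G.neighborFinset v).erase w).filter
        (fun u => wpMsg G k t u v = true) := by
      intro u hu
      obtain ⟨hne, hus⟩ := Finset.mem_erase.mp hu
      have h2 : u ∈ A ∩ G.neighborSet v := hs hus
      simp only [Finset.mem_filter, Finset.mem_erase, SimpleGraph.mem_neighborFinset]
      exact ⟨⟨hne, h2.2⟩, ih u h2.1 v⟩
    have := Finset.card_le_card hsub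
    have := Finset.pred_card_le_card_erase (s := s) (a := w)
    omega

lemma core_mark {A : Set V} (hA : degGE G k A) {v : V} (hv : v ∈ A) (t : ℕ) :
    wpMark G k t v = true := by
  obtain ⟨s, hs, hcard⟩ := hA v hv
  rw [wpMark, decide_eq_true_eq]
  refine le_trans hcard (Finset.card_le_card ?_)
  intro u hu
  have h2 : u ∈ A ∩ G.neighborSet v := hs hu
  simp only [Finset.mem_filter, SimpleGraph.mem_neighborFinset]
  exact ⟨h2.2, core_msg G k hA t u h2.1 v⟩

lemma degGE_marked (hk : 3 ≤ k) : degGE G k {v : V | ∀ t, wpMark G k t v = true} := by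
  classical
  intro v hv
  -- for each neighbour whose message to v eventually dies, pick a death time
  set τ : V → ℕ := fun u => if h : ∃ t, wpMsg G k t u v = false then h.choose else 0 with hτ
  set T : ℕ := (G.neighborFinset v).sup τ with hT
  refine ⟨(G.neighborFinset v).filter (fun u => wpMsg G k T u v = true), ?_, ?_⟩
  · intro u hu
    simp only [Finset.coe_filter, Set.mem_setOf_eq] at hu
    obtain ⟨hunb, humsg⟩ := hu
    -- the message u → v is true for all times
    have hall : ∀ t, wpMsg G k t u v = true := by
      intro t
      by_contra hbad
      have hex : ∃ t, wpMsg G k t u v = false := ⟨t, by simpa using hbad⟩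
      have hτu : wpMsg G k (τ u) u v = false := by
        rw [hτ]; simp only [hex, dif_pos]; exact hex.choose_spec
      have hle : τ u ≤ T := Finset.le_sup hunb
      have := wpMsg_anti G k hle u v humsg
      rw [this] at hτu
      exact absurd hτu (by simp)
    constructor
    · -- u is marked at all times
      intro t
      rw [wpMark, decide_eq_true_eq]
      have hmsg : wpMsg G k (t + 1) u v = true := hall (t + 1)
      rw [wpMsg_succ, decide_eq_true_eq, Finset.filter_erase] at hmsg
      set F := (G.neighborFinset u).filter (fun w => wpMsg G k t w u = true) with hF
      have hvF : v ∈ F := by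
        simp only [hF, Finset.mem_filter, SimpleGraph.mem_neighborFinset]
        refine ⟨(G.mem_neighborFinset v u).mp hunb |>.symm, ?_⟩
        cases t with
        | zero => rfl
        | succ t => exact wpMark_msg G k (hv t) u
      have := Finset.card_erase_add_one hvF
      omega
    · exact (G.mem_neighborFinset v u).mp hunb
  · have := hv T
    rw [wpMark, decide_eq_true_eq] at this
    exact this

end Aux


theorem stmt_19 {V : Type*} [Countable V] (G : SimpleGraph V)
    [∀ v, Fintype (G.neighborSet v)] [DecidableEq V] (k : ℕ) (hk : 3 ≤ k) :
    (∀ v : V, ∃ t0 : ℕ, ∀ t : ℕ, t0 ≤ t → wpMark G k t v = wpMark G k t0 v) ∧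
    (∀ v : V, v ∈ coreSet G k ↔ ∀ᶠ t in atTop, wpMark G k t v = true) ∧
    coreSet G k = {v : V | ∀ t : ℕ, wpMark G k t v = true} := by
  have hcore : coreSet G k = {v : V | ∀ t : ℕ, wpMark G k t v = true} := by
    apply le_antisymm
    · rintro v ⟨A, hA, hvA⟩ t
      exact core_mark G k hA hvA t
    · intro v hv
      exact ⟨_, degGE_marked G k hk, hv⟩
  refine ⟨?_, ?_, hcore⟩
  · intro v
    by_cases h : ∀ t, wpMark G k t v = true
    · exact ⟨0, fun t _ => (h t).trans (h 0).symm⟩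
    · push_neg at h
      obtain ⟨t0, ht0⟩ := h
      have ht0' : wpMark G k t0 v = false := by simpa using ht0
      refine ⟨t0, fun t ht => ?_⟩
      have : wpMark G k t v = false := by
        by_contra hb
        have : wpMark G k t v = true := by simpa using hb
        have := wpMark_anti G k ht v this
        rw [this] at ht0'
        exact absurd ht0' (by simp)
      rw [this, ht0']
  · intro v
    rw [hcore]
    constructor
    · intro hv
      exact Eventually.of_forall hv
    · intro hv t
      obtain ⟨N, hN⟩ := eventually_atTop.mp hv
      exact wpMark_anti G k (le_max_left t N) v (hN (max t N) (le_max_right t N))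
end
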